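/- arXiv:2501.10773 — 3 statements merged into one kernel-verified Lean document; each statement's English description precedes it below -/
import Mathlib

section
/- Let m be a measure on a space M, let W₁, W₂ be measurable subsets with finite positive measure, and let d : M × M → [0,∞) be measurable. Define V₁ = {(x,x') ∈ W₁×W₂ : d(x,z(x,x')) ≥ d(z(x,x'),x')} and V₂ its complement in W₁×W₂ for a measurable assignment z. Then either there exists x₁ ∈ W₁ such that m({x' ∈ W₂ : d(x₁, z(x₁,x')) ≥ d(z(x₁,x'), x')}) ≥ (1/2) m(W₂), or there exists x₁ ∈ W₂ such that m({x ∈ W₁ : d(x, z(x,x₁)) ≤ d(z(x,x₁), x₁)}) ≥ (1/2) m(W₁). -/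
open MeasureTheory ENNReal

lemma exists_ge_of_setLIntegral {α : Type*} [MeasurableSpace α] (μ : Measure α)
    (s : Set α) (hs : MeasurableSet s) (hs0 : 0 < μ s) (hsfin : μ s < ⊤)
    (f : α → ℝ≥0∞) (hf : Measurable f) (c : ℝ≥0∞) (hc : c < ⊤)
    (h : c * μ s ≤ ∫⁻ x in s, f x ∂μ) : ∃ x ∈ s, c ≤ f x := by
  by_contra hcon
  push_neg at hcon
  have hle : ∀ᵐ x ∂μ.restrict s, f x ≤ c := by
    filter_upwards [ae_restrict_mem hs] with x hx using (hcon x hx).le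
  have hfin : ∫⁻ x in s, f x ∂μ ≤ c * μ s := by
    calc ∫⁻ x in s, f x ∂μ ≤ ∫⁻ _ in s, c ∂μ := lintegral_mono_ae hle
    _ = c * μ s := by simp [Measure.restrict_apply MeasurableSet.univ]
  have heq : ∫⁻ x in s, f x ∂μ = c * μ s := le_antisymm hfin h
  have hfint : ∫⁻ x in s, f x ∂μ ≠ ⊤ := by
    rw [heq]; exact (ENNReal.mul_lt_top hc hsfin).ne
  have hsub : ∫⁻ x in s, (c - f x) ∂μ = 0 := by
    rw [lintegral_sub hf hfint hle]
    simp [heq, Measure.restrict_apply MeasurableSet.univ]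
  have hz := (lintegral_eq_zero_iff (measurable_const.sub hf)).mp hsub
  have hge : ∀ᵐ x ∂μ.restrict s, c ≤ f x := by
    filter_upwards [hz] with x hx
    exact tsub_eq_zero_iff_le.mp hx
  obtain ⟨x, hxs, hx⟩ := Measure.exists_mem_of_measure_ne_zero_of_ae hs0.ne' hge
  exact absurd hx (not_le.mpr (hcon x hxs))

theorem fubini_pigeonhole {M : Type*} [MeasurableSpace M] (m : Measure M)
    [SigmaFinite m]
    (W₁ W₂ : Set M) (hW₁ : MeasurableSet W₁) (hW₂ : MeasurableSet W₂)
    (h1 : 0 < m W₁) (h1' : m W₁ < ⊤) (h2 : 0 < m W₂) (h2' : m W₂ < ⊤)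
    (d : M → M → ℝ) (z : M → M → M)
    (hd : ∀ x y, 0 ≤ d x y)
    (hmeas : Measurable (fun q : M × M => d q.1 (z q.1 q.2) - d (z q.1 q.2) q.2)) :
    (∃ x₁ ∈ W₁, m W₂ / 2 ≤ m {x' ∈ W₂ | d (z x₁ x') x' ≤ d x₁ (z x₁ x')}) ∨
    (∃ x₁ ∈ W₂, m W₁ / 2 ≤ m {x ∈ W₁ | d x (z x x₁) ≤ d (z x x₁) x₁}) := by
  set f : M × M → ℝ := fun q => d q.1 (z q.1 q.2) - d (z q.1 q.2) q.2 with hfdef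
  set V₁ : Set (M × M) := (W₁ ×ˢ W₂) ∩ f ⁻¹' (Set.Ici 0) with hV₁def
  set V₂ : Set (M × M) := (W₁ ×ˢ W₂) ∩ f ⁻¹' (Set.Iic 0) with hV₂def
  have hV₁ : MeasurableSet V₁ := (hW₁.prod hW₂).inter (hmeas measurableSet_Ici)
  have hV₂ : MeasurableSet V₂ := (hW₁.prod hW₂).inter (hmeas measurableSet_Iic)
  have hunion : V₁ ∪ V₂ = W₁ ×ˢ W₂ := by
    ext q
    simp only [hV₁def, hV₂def, Set.mem_union, Set.mem_inter_iff, Set.mem_preimage,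
      Set.mem_Ici, Set.mem_Iic]
    constructor
    · rintro (⟨h, _⟩ | ⟨h, _⟩) <;> exact h
    · intro h
      rcases le_total 0 (f q) with h' | h'
      · exact Or.inl ⟨h, h'⟩
      · exact Or.inr ⟨h, h'⟩
  have hsum : m W₁ * m W₂ ≤ (m.prod m) V₁ + (m.prod m) V₂ := by
    calc m W₁ * m W₂ = (m.prod m) (W₁ ×ˢ W₂) := (Measure.prod_prod W₁ W₂).symm
    _ = (m.prod m) (V₁ ∪ V₂) := by rw [hunion]
    _ ≤ (m.prod m) V₁ + (m.prod m) V₂ := measure_union_le _ _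
  have hhalf : (m W₁ * m W₂) / 2 ≤ (m.prod m) V₁ ∨
      (m W₁ * m W₂) / 2 ≤ (m.prod m) V₂ := by
    by_contra hcon
    push_neg at hcon
    have hlt := ENNReal.add_lt_add hcon.1 hcon.2
    rw [ENNReal.add_halves] at hlt
    exact absurd hsum (not_le.mpr hlt)
  rcases hhalf with hcase | hcase
  · -- slice in the first coordinate
    left
    set g : M → ℝ≥0∞ := fun x => m (Prod.mk x ⁻¹' V₁) with hgdef
    have hg : Measurable g := measurable_measure_prodMk_left hV₁
    have hslice : ∀ x ∈ W₁,
        Prod.mk x ⁻¹' V₁ = {x' ∈ W₂ | d (z x x') x' ≤ d x (z x x')} := by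
      intro x hx
      ext x'
      simp only [hV₁def, Set.mem_preimage, Set.mem_inter_iff, Set.mem_prod,
        Set.mem_Ici, Set.mem_setOf_eq, hfdef, sub_nonneg]
      tauto
    have hzero : ∀ x ∉ W₁, Prod.mk x ⁻¹' V₁ = ∅ := by
      intro x hx
      ext x'
      simp only [hV₁def, Set.mem_preimage, Set.mem_inter_iff, Set.mem_prod,
        Set.mem_empty_iff_false, iff_false]
      tauto
    have hcompl : ∫⁻ x in W₁ᶜ, g x ∂m = 0 := by
      have hae : (fun x => g x) =ᵐ[m.restrict W₁ᶜ] (fun _ => 0) := by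
        filter_upwards [ae_restrict_mem hW₁.compl] with x hx
        simp [hgdef, hzero x hx]
      rw [lintegral_congr_ae hae, lintegral_zero]
    have hint : (m W₂ / 2) * m W₁ ≤ ∫⁻ x in W₁, g x ∂m := by
      have h₁ : (m.prod m) V₁ = ∫⁻ x, g x ∂m := Measure.prod_apply hV₁
      have h₂ : ∫⁻ x, g x ∂m = ∫⁻ x in W₁, g x ∂m := by
        rw [← lintegral_add_compl g hW₁, hcompl, add_zero]
      have h₃ : (m W₁ * m W₂) / 2 = (m W₂ / 2) * m W₁ := by
        rw [div_eq_mul_inv, div_eq_mul_inv]; ring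
      rw [← h₂, ← h₁, ← h₃]
      exact hcase
    obtain ⟨x, hx, hxle⟩ := exists_ge_of_setLIntegral m W₁ hW₁ h1 h1' g hg
      (m W₂ / 2) (ENNReal.div_lt_top h2'.ne (by norm_num)) hint
    refine ⟨x, hx, ?_⟩
    rw [hgdef] at hxle
    simp only at hxle
    rwa [hslice x hx] at hxle
  · -- slice in the second coordinate
    right
    set g : M → ℝ≥0∞ := fun y => m ((fun x => (x, y)) ⁻¹' V₂) with hgdef
    have hg : Measurable g := measurable_measure_prodMk_right hV₂
    have hslice : ∀ y ∈ W₂,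
        (fun x => (x, y)) ⁻¹' V₂ = {x ∈ W₁ | d x (z x y) ≤ d (z x y) y} := by
      intro y hy
      ext x
      simp only [hV₂def, Set.mem_preimage, Set.mem_inter_iff, Set.mem_prod,
        Set.mem_Iic, Set.mem_setOf_eq, hfdef, sub_nonpos]
      tauto
    have hzero : ∀ y ∉ W₂, (fun x => (x, y)) ⁻¹' V₂ = ∅ := by
      intro y hy
      ext x
      simp only [hV₂def, Set.mem_preimage, Set.mem_inter_iff, Set.mem_prod,
        Set.mem_empty_iff_false, iff_false]
      tauto
    have hcompl : ∫⁻ y in W₂ᶜ, g y ∂m = 0 := by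
      have hae : (fun y => g y) =ᵐ[m.restrict W₂ᶜ] (fun _ => 0) := by
        filter_upwards [ae_restrict_mem hW₂.compl] with y hy
        simp [hgdef, hzero y hy]
      rw [lintegral_congr_ae hae, lintegral_zero]
    have hint : (m W₁ / 2) * m W₂ ≤ ∫⁻ y in W₂, g y ∂m := by
      have h₁ : (m.prod m) V₂ = ∫⁻ y, g y ∂m := Measure.prod_apply_symm hV₂
      have h₂ : ∫⁻ y, g y ∂m = ∫⁻ y in W₂, g y ∂m := by
        rw [← lintegral_add_compl g hW₂, hcompl, add_zero]
      have h₃ : (m W₁ * m W₂) / 2 = (m W₁ / 2) * m W₂ := by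
        rw [div_eq_mul_inv, div_eq_mul_inv]; ring
      rw [← h₂, ← h₁, ← h₃]
      exact hcase
    obtain ⟨y, hy, hyle⟩ := exists_ge_of_setLIntegral m W₂ hW₂ h2 h2' g hg
      (m W₁ / 2) (ENNReal.div_lt_top h1'.ne (by norm_num)) hint
    refine ⟨y, hy, ?_⟩
    rw [hgdef] at hyle
    simp only at hyle
    rwa [hslice y hy] at hyle
end

section
/- Let σ : (0, R] → (0, ∞) be differentiable and φ : (0, R] → [0, ∞) continuous with ∂_r log(σ(r)/(e^{ϑr} r^{n-1})) ≤ φ(r) for all r. Then for any 0 < t ≤ r ≤ R with r/(1+Λ²) ≤ t (where Λ ≥ 1), σ(r) ≤ (1+Λ²)^{n-1} e^{ϑ r Λ²/(1+Λ²)} (σ(t) + ∫_t^r φ(s) σ(s) ds). -/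
/-!
Write `σ = g · w` with the weight `w x = e^{ϑx} x^{n-1}`. The hypothesis says `(log g)' ≤ φ`,
i.e. `g' ≤ φ g`, so integrating gives `g r ≤ g t + ∫_t^r φ g`. Since `w` is increasing,
`φ g ≤ φ σ / w t` on `[t, r]`, hence `σ r ≤ (w r / w t) (σ t + ∫_t^r φ σ)`, and `r ≤ (1 + Λ²) t`
bounds `w r / w t = e^{ϑ(r-t)} (r/t)^{n-1}`.
-/

open Real Set

theorem deriv_le_mul_of_deriv_log_le {g : ℝ → ℝ} {x c : ℝ} (hg : DifferentiableAt ℝ g x)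
    (hpos : 0 < g x) (h : deriv (fun y => log (g y)) x ≤ c) : deriv g x ≤ c * g x := by
  rw [(hg.hasDerivAt.log hpos.ne').deriv] at h
  exact (div_le_iff₀ hpos).1 h

theorem le_add_integral_of_deriv_le {g ψ : ℝ → ℝ} {a b : ℝ} (hab : a ≤ b)
    (hg : ∀ x ∈ Icc a b, DifferentiableAt ℝ g x) (hψ : ContinuousOn ψ (Icc a b))
    (h : ∀ x ∈ Ioo a b, deriv g x ≤ ψ x) : g b ≤ g a + ∫ x in a..b, ψ x := by
  have := intervalIntegral.sub_le_integral_of_hasDeriv_right_of_le hab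
    (fun x hx => (hg x hx).continuousAt.continuousWithinAt)
    (fun x hx => (hg x (Ioo_subset_Icc_self hx)).hasDerivAt.hasDerivWithinAt)
    (hψ.integrableOn_compact isCompact_Icc) h
  linarith

theorem le_div_mul_add_integral_of_deriv_log_div_le {σ w φ : ℝ → ℝ} {t r : ℝ} (htr : t ≤ r)
    (hσ : ∀ x ∈ Icc t r, DifferentiableAt ℝ σ x) (hσpos : ∀ x ∈ Icc t r, 0 < σ x)
    (hw : ∀ x ∈ Icc t r, DifferentiableAt ℝ w x) (hwpos : ∀ x ∈ Icc t r, 0 < w x)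
    (hwmono : MonotoneOn w (Icc t r)) (hφ : ContinuousOn φ (Icc t r))
    (hφ0 : ∀ x ∈ Icc t r, 0 ≤ φ x)
    (hlog : ∀ x ∈ Ioo t r, deriv (fun y => log (σ y / w y)) x ≤ φ x) :
    σ r ≤ w r / w t * (σ t + ∫ s in t..r, φ s * σ s) := by
  have ht : t ∈ Icc t r := left_mem_Icc.2 htr
  have hr : r ∈ Icc t r := right_mem_Icc.2 htr
  have hg : ∀ x ∈ Icc t r, DifferentiableAt ℝ (fun y => σ y / w y) x := fun x hx =>
    (hσ x hx).div (hw x hx) (hwpos x hx).ne'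
  have hσc : ContinuousOn σ (Icc t r) := fun x hx => (hσ x hx).continuousAt.continuousWithinAt
  have hgc : ContinuousOn (fun y => σ y / w y) (Icc t r) := fun x hx =>
    (hg x hx).continuousAt.continuousWithinAt
  have hgronwall : σ r / w r ≤ σ t / w t + ∫ s in t..r, φ s * (σ s / w s) :=
    le_add_integral_of_deriv_le htr hg (hφ.mul hgc) fun x hx =>
      deriv_le_mul_of_deriv_log_le (hg x (Ioo_subset_Icc_self hx))
        (div_pos (hσpos x (Ioo_subset_Icc_self hx)) (hwpos x (Ioo_subset_Icc_self hx)))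
        (hlog x hx)
  have hintegral : ∫ s in t..r, φ s * (σ s / w s) ≤ (∫ s in t..r, φ s * σ s) / w t := by
    rw [← intervalIntegral.integral_div]
    refine intervalIntegral.integral_mono_on htr
      ((hφ.mul hgc).intervalIntegrable_of_Icc htr)
      (((hφ.mul hσc).div_const _).intervalIntegrable_of_Icc htr) fun s hs => ?_
    rw [mul_div_assoc]
    exact mul_le_mul_of_nonneg_left
      (div_le_div_of_nonneg_left (hσpos s hs).le (hwpos t ht) (hwmono ht hs hs.1)) (hφ0 s hs)
  have hquotient : σ r / w r ≤ (σ t + ∫ s in t..r, φ s * σ s) / w t := by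
    rw [add_div]
    linarith
  calc σ r ≤ (σ t + ∫ s in t..r, φ s * σ s) / w t * w r :=
        (div_le_iff₀ (hwpos r hr)).1 hquotient
    _ = w r / w t * (σ t + ∫ s in t..r, φ s * σ s) := by ring

theorem monotoneOn_exp_mul_mul_pow {ϑ : ℝ} (hϑ : 0 ≤ ϑ) (k : ℕ) :
    MonotoneOn (fun x => exp (ϑ * x) * x ^ k) (Ici 0) := fun x hx y _ hxy => by
  dsimp only
  gcongr
  exact pow_nonneg hx k

theorem exp_mul_mul_pow_div_le {ϑ c t r : ℝ} (k : ℕ) (hϑ : 0 ≤ ϑ) (hc : 0 < c) (ht : 0 < t)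
    (htr : t ≤ r) (hrc : r / c ≤ t) :
    exp (ϑ * r) * r ^ k / (exp (ϑ * t) * t ^ k) ≤ c ^ k * exp (ϑ * (r - r / c)) := by
  have hratio : r / t ≤ c := by
    rw [div_le_iff₀ hc] at hrc
    rw [div_le_iff₀ ht]
    linarith
  calc exp (ϑ * r) * r ^ k / (exp (ϑ * t) * t ^ k) = (r / t) ^ k * exp (ϑ * (r - t)) := by
        rw [mul_sub, exp_sub, div_pow]
        field_simp
    _ ≤ c ^ k * exp (ϑ * (r - r / c)) := by
      gcongr
      exact div_nonneg (ht.le.trans htr) ht.le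

theorem area_element_estimate_general (n : ℕ) (ϑ Λ R : ℝ)
    (hϑ : 0 ≤ ϑ)
    (σ φ : ℝ → ℝ)
    (hσpos : ∀ r ∈ Set.Ioc (0:ℝ) R, 0 < σ r)
    (hσd : ∀ r ∈ Set.Ioc (0:ℝ) R, DifferentiableAt ℝ σ r)
    (hφc : ContinuousOn φ (Set.Ioc 0 R))
    (hφ0 : ∀ r ∈ Set.Ioc (0:ℝ) R, 0 ≤ φ r)
    (hlog : ∀ r ∈ Set.Ioc (0:ℝ) R,
      deriv (fun x => Real.log (σ x / (Real.exp (ϑ * x) * x ^ (n - 1)))) r ≤ φ r) :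
    ∀ t r : ℝ, 0 < t → t ≤ r → r ≤ R → r / (1 + Λ ^ 2) ≤ t →
      σ r ≤ (1 + Λ ^ 2) ^ (n - 1) * Real.exp (ϑ * r * Λ ^ 2 / (1 + Λ ^ 2)) *
        (σ t + ∫ s in t..r, φ s * σ s) := by
  intro t r ht htr hrR hrt
  have hsub : Icc t r ⊆ Ioc 0 R := fun x hx => ⟨ht.trans_le hx.1, hx.2.trans hrR⟩
  have hpos : Icc t r ⊆ Ioi 0 := fun x hx => ht.trans_le hx.1
  have hestimate := le_div_mul_add_integral_of_deriv_log_div_le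
    (w := fun x => exp (ϑ * x) * x ^ (n - 1)) htr (fun x hx => hσd x (hsub hx))
    (fun x hx => hσpos x (hsub hx)) (fun x _ => by fun_prop)
    (fun x hx => by have : 0 < x := hpos hx; positivity)
    ((monotoneOn_exp_mul_mul_pow hϑ _).mono (hpos.trans Ioi_subset_Ici_self))
    (hφc.mono hsub) (fun x hx => hφ0 x (hsub hx))
    (fun x hx => hlog x (hsub (Ioo_subset_Icc_self hx)))
  have hweight := exp_mul_mul_pow_div_le (n - 1) hϑ (by positivity) ht htr hrt
  have hsum : 0 ≤ σ t + ∫ s in t..r, φ s * σ s :=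
    add_nonneg (hσpos t (hsub (left_mem_Icc.2 htr))).le <| intervalIntegral.integral_nonneg htr
      fun s hs => mul_nonneg (hφ0 s (hsub hs)) (hσpos s (hsub hs)).le
  have hexponent : ϑ * (r - r / (1 + Λ ^ 2)) = ϑ * r * Λ ^ 2 / (1 + Λ ^ 2) := by
    field_simp
    ring
  rw [hexponent] at hweight
  exact hestimate.trans (mul_le_mul_of_nonneg_right hweight hsum)

theorem area_element_estimate (n : ℕ) (hn : 2 ≤ n) (ϑ Λ R : ℝ)
    (hϑ : 0 ≤ ϑ) (hΛ : 1 ≤ Λ) (hR : 0 < R)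
    (σ φ : ℝ → ℝ)
    (hσpos : ∀ r ∈ Set.Ioc (0:ℝ) R, 0 < σ r)
    (hσd : ∀ r ∈ Set.Ioc (0:ℝ) R, DifferentiableAt ℝ σ r)
    (hφc : ContinuousOn φ (Set.Ioc 0 R))
    (hφ0 : ∀ r ∈ Set.Ioc (0:ℝ) R, 0 ≤ φ r)
    (hlog : ∀ r ∈ Set.Ioc (0:ℝ) R,
      deriv (fun x => Real.log (σ x / (Real.exp (ϑ * x) * x ^ (n - 1)))) r ≤ φ r) :
    ∀ t r : ℝ, 0 < t → t ≤ r → r ≤ R → r / (1 + Λ ^ 2) ≤ t →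
      σ r ≤ (1 + Λ ^ 2) ^ (n - 1) * Real.exp (ϑ * r * Λ ^ 2 / (1 + Λ ^ 2)) *
        (σ t + ∫ s in t..r, φ s * σ s) :=
  area_element_estimate_general n ϑ Λ R hϑ σ φ hσpos hσd hφc hφ0 hlog
end

section
/- Let v(r) := ∫₀^r e^{ϑt} s_K(t)^{n-1} dt with ϑ ≥ 0, K ∈ ℝ, n ≥ 2 (and r ≤ π/(2√K) when K > 0). Then for 0 < r₁ ≤ r₂ (within the allowed range), v(r₂)/v(r₁) ≤ e^{(ϑ + (n-1)√|K|) r₂} (r₂/r₁)^n. -/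
open Real

noncomputable def sK (K t : ℝ) : ℝ :=
  if 0 < K then Real.sin (Real.sqrt K * t) / Real.sqrt K
  else if K = 0 then t
  else Real.sinh (Real.sqrt (-K) * t) / Real.sqrt (-K)

/-!
On the admissible range `s_K` is squeezed between two linear functions, `b t ≤ s_K t ≤ a t`, with
`a / b = exp (√|K| r₂)`: for `K > 0` take `a = 1` (`sin x ≤ x`) and `b = exp (-√K r₂)`
(`x ≤ eˣ sin x` on `[0, π/2]`); for `K ≤ 0` take `b = 1` (`x ≤ sinh x`) and `a = exp (√(-K) r₂)`
(`sinh x ≤ x eˣ`). Bounding the weight `exp (ϑ t)` by `exp (ϑ r₂)` above and by `1` below, both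
volumes are then compared with `∫₀ʳ tⁿ⁻¹ dt = rⁿ / n`.
-/

open Set intervalIntegral

namespace Real

lemma le_exp_mul_sin {x : ℝ} (hx : 0 ≤ x) (hx2 : x ≤ π / 2) : x ≤ exp x * sin x := by
  have hmono : MonotoneOn (fun y => exp y * sin y - y) (Icc 0 (π / 2)) := by
    apply monotoneOn_of_deriv_nonneg (convex_Icc _ _) (by fun_prop) (by fun_prop)
    intro y hy
    rw [interior_Icc] at hy
    have hderiv : HasDerivAt (fun y => exp y * sin y - y)
        (exp y * (sin y + cos y) - 1) y :=
      (((hasDerivAt_exp y).mul (hasDerivAt_sin y)).sub (hasDerivAt_id y)).congr_deriv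
        (by ring)
    rw [hderiv.deriv]
    have hexp : 1 ≤ exp y := one_le_exp hy.1.le
    have hsin : 0 ≤ sin y := sin_nonneg_of_nonneg_of_le_pi hy.1.le (by linarith [hy.2, pi_pos])
    have hcos : 0 ≤ cos y := cos_nonneg_of_mem_Icc ⟨by linarith [hy.1, pi_pos], hy.2.le⟩
    -- `(sin y + cos y)² = 1 + 2 sin y cos y ≥ 1`
    have hsum : 1 ≤ sin y + cos y := by nlinarith [sin_sq_add_cos_sq y]
    nlinarith
  have := hmono ⟨le_rfl, by positivity⟩ ⟨hx, hx2⟩ hx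
  simp only [exp_zero, sin_zero, mul_zero, sub_zero] at this
  linarith

lemma sinh_le_mul_exp (x : ℝ) : sinh x ≤ x * exp x := by
  have hexp : exp (-x) = exp x * exp (-(2 * x)) := by rw [← exp_add]; ring_nf
  have hlin : 1 - 2 * x ≤ exp (-(2 * x)) := by linarith [add_one_le_exp (-(2 * x))]
  rw [sinh_eq, hexp]
  nlinarith [exp_pos x]

end Real

lemma continuous_sK (K : ℝ) : Continuous (sK K) := by
  unfold sK
  split_ifs <;> fun_prop

lemma sK_bounds_of_pos {K t : ℝ} (hK : 0 < K) (ht : 0 ≤ t) (htπ : √K * t ≤ π / 2) :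
    t * exp (-(√K * t)) ≤ sK K t ∧ sK K t ≤ t := by
  have hsqrt : 0 < √K := sqrt_pos.2 hK
  have hx : 0 ≤ √K * t := by positivity
  simp only [sK, if_pos hK, le_div_iff₀ hsqrt, div_le_iff₀ hsqrt]
  constructor
  · calc t * exp (-(√K * t)) * √K = (exp (√K * t))⁻¹ * (√K * t) := by rw [exp_neg]; ring
      _ ≤ sin (√K * t) := by
        rw [inv_mul_le_iff₀ (exp_pos _)]
        exact le_exp_mul_sin hx htπ
  · linarith [sin_le hx]

lemma sK_bounds_of_nonpos {K t : ℝ} (hK : K ≤ 0) (ht : 0 ≤ t) :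
    t ≤ sK K t ∧ sK K t ≤ t * exp (√(-K) * t) := by
  rcases hK.eq_or_lt with rfl | hKneg
  · simp only [sK, lt_irrefl, if_false, if_true, neg_zero, sqrt_zero, zero_mul, exp_zero,
      mul_one, le_refl, and_self]
  have hsqrt : 0 < √(-K) := sqrt_pos.2 (neg_pos.2 hKneg)
  have hx : 0 ≤ √(-K) * t := by positivity
  simp only [sK, if_neg hKneg.not_gt, if_neg hKneg.ne, le_div_iff₀ hsqrt, div_le_iff₀ hsqrt]
  constructor
  · linarith [self_le_sinh_iff.2 hx]
  · linarith [sinh_le_mul_exp (√(-K) * t)]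

lemma exists_linear_bounds_sK {K r : ℝ} (hK : 0 < K → √K * r ≤ π / 2) :
    ∃ a b : ℝ, 0 < b ∧ a / b = exp (√|K| * r) ∧
      ∀ t ∈ Icc 0 r, b * t ≤ sK K t ∧ sK K t ≤ a * t := by
  rcases lt_or_ge 0 K with hKpos | hKnp
  · refine ⟨1, exp (-(√K * r)), exp_pos _,
      by rw [abs_of_pos hKpos, exp_neg, one_div, inv_inv], ?_⟩
    intro t ⟨ht0, htr⟩
    have hKt : √K * t ≤ √K * r := by gcongr
    obtain ⟨hlow, hup⟩ := sK_bounds_of_pos hKpos ht0 (hKt.trans (hK hKpos))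
    refine ⟨le_trans ?_ hlow, by linarith⟩
    rw [mul_comm]
    gcongr
  · refine ⟨exp (√(-K) * r), 1, one_pos, by rw [abs_of_nonpos hKnp, div_one], ?_⟩
    intro t ⟨ht0, htr⟩
    obtain ⟨hlow, hup⟩ := sK_bounds_of_nonpos hKnp ht0
    refine ⟨by linarith, hup.trans ?_⟩
    rw [mul_comm]
    gcongr

section VolumeBounds

variable {f : ℝ → ℝ} {ϑ r : ℝ}

lemma integral_exp_mul_pow_le (hf : Continuous f) (m : ℕ) {a : ℝ} (hϑ : 0 ≤ ϑ) (hr : 0 ≤ r)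
    (hbound : ∀ t ∈ Icc 0 r, 0 ≤ f t ∧ f t ≤ a * t) :
    ∫ t in (0 : ℝ)..r, exp (ϑ * t) * f t ^ m ≤ exp (ϑ * r) * a ^ m * (r ^ (m + 1) / (m + 1)) := by
  calc ∫ t in (0 : ℝ)..r, exp (ϑ * t) * f t ^ m
      ≤ ∫ t in (0 : ℝ)..r, exp (ϑ * r) * a ^ m * t ^ m := by
        refine integral_mono_on hr ((by fun_prop : Continuous _).intervalIntegrable _ _)
          ((by fun_prop : Continuous _).intervalIntegrable _ _) fun t ht => ?_
        obtain ⟨hf0, hfa⟩ := hbound t ht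
        rw [mul_assoc, ← mul_pow]
        have hexp : ϑ * t ≤ ϑ * r := by gcongr; exact ht.2
        gcongr
    _ = exp (ϑ * r) * a ^ m * (r ^ (m + 1) / (m + 1)) := by simp [integral_pow]

lemma le_integral_exp_mul_pow (hf : Continuous f) (m : ℕ) {b : ℝ} (hϑ : 0 ≤ ϑ) (hr : 0 ≤ r)
    (hb : 0 ≤ b) (hbound : ∀ t ∈ Icc 0 r, b * t ≤ f t) :
    b ^ m * (r ^ (m + 1) / (m + 1)) ≤ ∫ t in (0 : ℝ)..r, exp (ϑ * t) * f t ^ m := by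
  calc b ^ m * (r ^ (m + 1) / (m + 1)) = ∫ t in (0 : ℝ)..r, (b * t) ^ m := by
        simp [mul_pow, integral_pow]
    _ ≤ ∫ t in (0 : ℝ)..r, exp (ϑ * t) * f t ^ m := by
        refine integral_mono_on hr ((by fun_prop : Continuous _).intervalIntegrable _ _)
          ((by fun_prop : Continuous _).intervalIntegrable _ _) fun t ht => ?_
        have hbt : 0 ≤ b * t := mul_nonneg hb ht.1
        have hpow : (b * t) ^ m ≤ f t ^ m := pow_le_pow_left₀ hbt (hbound t ht) m
        have hexp : 1 ≤ exp (ϑ * t) := one_le_exp (mul_nonneg hϑ ht.1)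
        exact hpow.trans (le_mul_of_one_le_left ((pow_nonneg hbt m).trans hpow) hexp)

lemma integral_exp_mul_pow_div_le (hf : Continuous f) (m : ℕ) {a b r₁ r₂ : ℝ} (hϑ : 0 ≤ ϑ)
    (h1 : 0 < r₁) (h12 : r₁ ≤ r₂) (hb : 0 < b)
    (hbound : ∀ t ∈ Icc 0 r₂, b * t ≤ f t ∧ f t ≤ a * t) :
    (∫ t in (0 : ℝ)..r₂, exp (ϑ * t) * f t ^ m) / (∫ t in (0 : ℝ)..r₁, exp (ϑ * t) * f t ^ m) ≤
      exp (ϑ * r₂) * (a / b) ^ m * (r₂ / r₁) ^ (m + 1) := by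
  have hupper := integral_exp_mul_pow_le hf m hϑ (h1.le.trans h12) fun t ht =>
    ⟨(mul_nonneg hb.le ht.1).trans (hbound t ht).1, (hbound t ht).2⟩
  have hlower := le_integral_exp_mul_pow hf m hϑ h1.le hb.le fun t ht =>
    (hbound t ⟨ht.1, ht.2.trans h12⟩).1
  have hr₂ : 0 < r₂ := h1.trans_le h12
  have ha : 0 ≤ a := by
    have := hbound r₁ ⟨h1.le, h12⟩
    nlinarith
  calc _ ≤ exp (ϑ * r₂) * a ^ m * (r₂ ^ (m + 1) / (m + 1)) /
        (b ^ m * (r₁ ^ (m + 1) / (m + 1))) :=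
        div_le_div₀ (by positivity) hupper (by positivity) hlower
    _ = exp (ϑ * r₂) * (a / b) ^ m * (r₂ / r₁) ^ (m + 1) := by
        rw [div_pow, div_pow]
        field_simp

end VolumeBounds

theorem comparison_volume_ratio (n : ℕ) (hn : 2 ≤ n) (ϑ K r₁ r₂ : ℝ)
    (hϑ : 0 ≤ ϑ) (h1 : 0 < r₁) (h12 : r₁ ≤ r₂)
    (hK : 0 < K → r₂ ≤ Real.pi / (2 * Real.sqrt K)) :
    (∫ t in (0:ℝ)..r₂, Real.exp (ϑ * t) * (sK K t) ^ (n - 1)) /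
      (∫ t in (0:ℝ)..r₁, Real.exp (ϑ * t) * (sK K t) ^ (n - 1)) ≤
    Real.exp ((ϑ + ((n : ℝ) - 1) * Real.sqrt |K|) * r₂) * (r₂ / r₁) ^ n := by
  obtain ⟨m, rfl⟩ : ∃ m, n = m + 1 := ⟨n - 1, by omega⟩
  have hrange : 0 < K → √K * r₂ ≤ π / 2 := fun hKpos => by
    have := hK hKpos
    rw [le_div_iff₀ (by positivity)] at this
    linarith
  obtain ⟨a, b, hb, hab, hbound⟩ := exists_linear_bounds_sK hrange
  calc _ ≤ exp (ϑ * r₂) * (a / b) ^ m * (r₂ / r₁) ^ (m + 1) := by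
        simpa using integral_exp_mul_pow_div_le (continuous_sK K) m hϑ h1 h12 hb hbound
    _ = _ := by
        rw [hab, ← exp_nat_mul, ← exp_add]
        push_cast
        ring_nf
end
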